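/- The spherical QST constant is at most the Euclidean QST constant: if γ ∈ (0,1] is such that for every d ≥ 2 and every C ⊆ S^d with C(e_{d+1},ρ) ⊆ sconv(C) (ρ ∈ (0,π/2)) there exist at most 2d points C' ⊆ C with C(e_{d+1}, γρ) ⊆ sconv(C'), then for every Q ⊆ ℝ^d with B(o,1) ⊆ conv(Q) there exist at most 2d points Q' ⊆ Q with B(o, γ') ⊆ conv(Q') for every γ' < γ. -/

import Mathlib

open Real Set
open scoped RealInnerProductSpace

noncomputable section

/-- Euclidean space `ℝ^n`. -/
abbrev E (n : ℕ) := EuclideanSpace ℝ (Fin n)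

/-- The unit sphere `S^{n-1} ⊆ ℝ^n`. -/
def unitSphere (n : ℕ) : Set (E n) := Metric.sphere 0 1

/-- The spherical cap with center `v` and spherical radius `ρ`. -/
def cap {n : ℕ} (v : E n) (ρ : ℝ) : Set (E n) := {u ∈ unitSphere n | Real.cos ρ ≤ ⟪u, v⟫}

/-- The last standard basis vector `e_{d+1}` of `ℝ^{d+1}`. -/
def eLast (d : ℕ) : E (d + 1) := EuclideanSpace.single (Fin.last d) 1

/-- Central projection from the origin onto the hyperplane `{x : x_{d+1} = 1}`,
identified with `ℝ^d` (with origin `e_{d+1}`). -/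
def PN {d : ℕ} (x : E (d + 1)) : E d := WithLp.toLp 2 (fun i : Fin d => x i.castSucc / x (Fin.last d))

/-- Points of the shorter great-circle arc between unit vectors `u` and `v`
(for `u`, `v` in an open hemisphere): normalized nonnegative combinations. -/
def arcPts {n : ℕ} (u v : E n) : Set (E n) :=
  {w | ∃ a b : ℝ, 0 ≤ a ∧ 0 ≤ b ∧ a • u + b • v ≠ 0 ∧ w = ‖a • u + b • v‖⁻¹ • (a • u + b • v)}

/-- A set `K ⊆ S^{n-1}` is spherically convex if it is the whole sphere, or it is
contained in an open hemisphere and contains the shorter arc between any two of its points. -/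
def IsSphConvex {n : ℕ} (K : Set (E n)) : Prop :=
  K = unitSphere n ∨
    ((∃ v : E n, ∀ x ∈ K, 0 < ⟪x, v⟫) ∧ ∀ u ∈ K, ∀ w ∈ K, arcPts u w ⊆ K)

/-- The spherical convex hull: the intersection of all spherically convex subsets
of the sphere containing `C`. -/
def sconv {n : ℕ} (C : Set (E n)) : Set (E n) :=
  ⋂₀ {K | IsSphConvex K ∧ K ⊆ unitSphere n ∧ C ⊆ K}

/-- The polar of a set `S ⊆ ℝ^n`. -/
def polar {n : ℕ} (S : Set (E n)) : Set (E n) := {x | ∀ s ∈ S, ⟪x, s⟫ ≤ 1}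

end

/-!
The inverse of the central projection `PN`, `z ↦ (z, 1) / ‖(z, 1)‖`, identifies `ℝ^d` with the
open upper hemisphere. It maps segments onto great-circle arcs, so it carries convex hulls onto
spherical convex hulls, and it maps the ball of radius `tan θ` onto the cap of radius `θ`.
Applying the spherical statement to the lift of `tan ρ • Q` and projecting back therefore gives
`Q' ⊆ Q` whose hull contains the ball of radius `tan (γ ρ) / tan ρ`, which tends to `γ` as
`ρ → 0`.
-/

open Filter Topology
open scoped Pointwise

namespace Gnomonic

variable {d : ℕ}

def homogenize (z : E d) : E (d + 1) := WithLp.toLp 2 (Fin.snoc z.ofLp 1)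

@[simp] lemma homogenize_castSucc (z : E d) (i : Fin d) : homogenize z i.castSucc = z i := by
  simp [homogenize]

@[simp] lemma homogenize_last (z : E d) : homogenize z (Fin.last d) = 1 := by
  simp [homogenize]

lemma homogenize_ne_zero (z : E d) : homogenize z ≠ 0 := fun h => by
  simpa [h] using homogenize_last z

lemma norm_homogenize (z : E d) : ‖homogenize z‖ = √(1 + ‖z‖ ^ 2) := by
  rw [EuclideanSpace.norm_eq, EuclideanSpace.norm_sq_eq, Fin.sum_univ_castSucc]
  simp [add_comm]

lemma homogenize_add {s t : ℝ} (hst : s + t = 1) (p q : E d) :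
    homogenize (s • p + t • q) = s • homogenize p + t • homogenize q := by
  ext j
  induction j using Fin.lastCases with
  | last => simp [hst]
  | cast i => simp

noncomputable def sphereLift (z : E d) : E (d + 1) := ‖homogenize z‖⁻¹ • homogenize z

lemma norm_sphereLift (z : E d) : ‖sphereLift z‖ = 1 :=
  norm_smul_inv_norm (homogenize_ne_zero z)

lemma sphereLift_mem_unitSphere (z : E d) : sphereLift z ∈ unitSphere (d + 1) :=
  mem_sphere_zero_iff_norm.2 (norm_sphereLift z)

lemma inner_eLast (x : E (d + 1)) : ⟪x, eLast d⟫ = x (Fin.last d) := by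
  simp [eLast, EuclideanSpace.inner_single_right]

lemma inner_sphereLift_eLast (z : E d) : ⟪sphereLift z, eLast d⟫ = cos (arctan ‖z‖) := by
  simp [sphereLift, inner_eLast, norm_homogenize, cos_arctan]

lemma PN_smul (x : E (d + 1)) {c : ℝ} (hc : c ≠ 0) : PN (c • x) = PN x := by
  ext i
  simp [PN, mul_div_mul_left _ _ hc]

lemma PN_homogenize (z : E d) : PN (homogenize z) = z := by
  ext i
  simp [PN]

lemma PN_sphereLift (z : E d) : PN (sphereLift z) = z := by
  rw [sphereLift, PN_smul _ (inv_ne_zero (norm_ne_zero_iff.2 (homogenize_ne_zero z))),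
    PN_homogenize]

lemma sphereLift_injective : Function.Injective (sphereLift (d := d)) :=
  Function.LeftInverse.injective PN_sphereLift

lemma homogenize_PN {x : E (d + 1)} (hx : x (Fin.last d) ≠ 0) :
    homogenize (PN x) = (x (Fin.last d))⁻¹ • x := by
  ext j
  induction j using Fin.lastCases with
  | last => simp [hx]
  | cast i => simp [PN, div_eq_inv_mul]

lemma sphereLift_PN {u : E (d + 1)} (hu : u ∈ unitSphere (d + 1)) (hpos : 0 < u (Fin.last d)) :
    sphereLift (PN u) = u := by
  have hu1 : ‖u‖ = 1 := mem_sphere_zero_iff_norm.1 hu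
  rw [sphereLift, homogenize_PN hpos.ne', norm_smul, hu1, mul_one, norm_inv, norm_of_nonneg hpos.le,
    inv_inv, smul_smul, mul_inv_cancel₀ hpos.ne', one_smul]

lemma sphereLift_mem_cap_iff {θ : ℝ} (hθ : θ ∈ Ioo 0 (π / 2)) (z : E d) :
    sphereLift z ∈ cap (eLast d) θ ↔ ‖z‖ ≤ tan θ := by
  have harctan : arctan ‖z‖ ∈ Icc 0 π :=
    ⟨arctan_nonneg.2 (norm_nonneg z), (arctan_lt_pi_div_two _).le.trans (by linarith [pi_pos])⟩
  have hθ' : θ ∈ Icc 0 π := ⟨hθ.1.le, hθ.2.le.trans (by linarith [pi_pos])⟩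
  have harctan_le : arctan ‖z‖ ≤ θ ↔ ‖z‖ ≤ tan θ := by
    conv_lhs => rw [← arctan_tan (by linarith [hθ.1, pi_pos]) hθ.2]
    exact arctan_strictMono.le_iff_le
  rw [cap, mem_sep_iff, inner_sphereLift_eLast, strictAntiOn_cos.le_iff_ge hθ' harctan,
    harctan_le]
  exact and_iff_right (sphereLift_mem_unitSphere z)

lemma cap_eq_image_sphereLift {θ : ℝ} (hθ : θ ∈ Ioo 0 (π / 2)) :
    cap (eLast d) θ = sphereLift '' Metric.closedBall 0 (tan θ) := by
  refine Subset.antisymm (fun u hu => ?_) ?_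
  · have hpos : 0 < u (Fin.last d) :=
      (cos_pos_of_mem_Ioo ⟨by linarith [hθ.1, pi_pos], hθ.2⟩).trans_le (inner_eLast u ▸ hu.2)
    have hu_eq := sphereLift_PN hu.1 hpos
    refine ⟨PN u, mem_closedBall_zero_iff.2 ((sphereLift_mem_cap_iff hθ _).1 ?_), hu_eq⟩
    rwa [hu_eq]
  · rintro _ ⟨z, hz, rfl⟩
    exact (sphereLift_mem_cap_iff hθ z).2 (mem_closedBall_zero_iff.1 hz)

lemma inv_norm_smul_eq_sphereLift {x : E (d + 1)} {c : ℝ} (hc : 0 < c) {z : E d}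
    (hx : x = c • homogenize z) : ‖x‖⁻¹ • x = sphereLift z := by
  rw [hx, sphereLift, norm_smul, norm_of_nonneg hc.le, smul_smul]
  field_simp

lemma arcPts_sphereLift (p q : E d) :
    arcPts (sphereLift p) (sphereLift q) = sphereLift '' segment ℝ p q := by
  refine Subset.antisymm ?_ ?_
  · rintro w ⟨a, b, ha, hb, hne, rfl⟩
    set α := a * ‖homogenize p‖⁻¹
    set β := b * ‖homogenize q‖⁻¹
    have hsum : a • sphereLift p + b • sphereLift q = α • homogenize p + β • homogenize q := by
      simp only [sphereLift, smul_smul, α, β]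
    have hα : 0 ≤ α := by positivity
    have hβ : 0 ≤ β := by positivity
    have hαβ : 0 < α + β := by
      refine (add_nonneg hα hβ).lt_of_ne fun h => hne ?_
      rw [hsum, show α = 0 by linarith, show β = 0 by linarith, zero_smul, zero_smul, add_zero]
    refine ⟨(α / (α + β)) • p + (β / (α + β)) • q,
      ⟨_, _, by positivity, by positivity, by field_simp, rfl⟩, ?_⟩
    refine (inv_norm_smul_eq_sphereLift hαβ ?_).symm
    rw [hsum, homogenize_add (by field_simp), smul_add, smul_smul, smul_smul,
      mul_div_cancel₀ _ hαβ.ne', mul_div_cancel₀ _ hαβ.ne']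
  · rintro _ ⟨z, ⟨s, t, hs, ht, hst, rfl⟩, rfl⟩
    have hcomb : (s * ‖homogenize p‖) • sphereLift p + (t * ‖homogenize q‖) • sphereLift q =
        homogenize (s • p + t • q) := by
      simp only [homogenize_add hst, sphereLift, smul_smul, mul_assoc,
        mul_inv_cancel₀ (norm_ne_zero_iff.2 (homogenize_ne_zero _)), mul_one]
    refine ⟨_, _, by positivity, by positivity, hcomb ▸ homogenize_ne_zero _, ?_⟩
    rw [hcomb, sphereLift]

lemma isSphConvex_image_sphereLift {s : Set (E d)} (hs : Convex ℝ s) :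
    IsSphConvex (sphereLift '' s) := by
  refine Or.inr ⟨⟨eLast d, ?_⟩, ?_⟩
  · rintro _ ⟨z, -, rfl⟩
    rw [inner_sphereLift_eLast]
    exact cos_arctan_pos _
  · rintro _ ⟨p, hp, rfl⟩ _ ⟨q, hq, rfl⟩
    rw [arcPts_sphereLift]
    exact image_mono (hs.segment_subset hp hq)

lemma convex_preimage_sphereLift {K : Set (E (d + 1))} (hK : IsSphConvex K) :
    Convex ℝ (sphereLift ⁻¹' K) := by
  rcases hK with rfl | ⟨-, harc⟩
  · rw [preimage_eq_univ_iff.2 fun _ ⟨z, hz⟩ => hz ▸ sphereLift_mem_unitSphere z]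
    exact convex_univ
  · refine convex_iff_segment_subset.2 fun p hp q hq => ?_
    rw [← image_subset_iff, ← arcPts_sphereLift]
    exact harc _ hp _ hq

lemma sconv_image_sphereLift (S : Set (E d)) :
    sconv (sphereLift '' S) = sphereLift '' convexHull ℝ S := by
  refine Subset.antisymm (sInter_subset_of_mem ⟨?_, ?_, ?_⟩) ?_
  · exact isSphConvex_image_sphereLift (convex_convexHull ℝ S)
  · rintro _ ⟨z, -, rfl⟩
    exact sphereLift_mem_unitSphere z
  · exact image_mono (subset_convexHull ℝ S)
  · rintro _ ⟨z, hz, rfl⟩ K ⟨hK, -, hSK⟩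
    exact convexHull_min (image_subset_iff.1 hSK) (convex_preimage_sphereLift hK) hz

end Gnomonic

lemma exists_mul_tan_le_tan_mul {γ γ' : ℝ} (hγ : 0 < γ) (hγ' : γ' < γ) :
    ∃ ρ ∈ Ioo 0 (π / 2), γ * ρ ∈ Ioo 0 (π / 2) ∧ γ' * tan ρ ≤ tan (γ * ρ) := by
  have hcos : ∀ᶠ ρ in 𝓝 0, γ' / γ < cos ρ :=
    continuous_cos.continuousAt.eventually_const_lt (by rwa [cos_zero, div_lt_one hγ])
  have hρ : ∀ᶠ ρ in 𝓝 (0 : ℝ), ρ < π / 2 := eventually_lt_nhds (by positivity)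
  have hγρ : ∀ᶠ ρ in 𝓝 (0 : ℝ), γ * ρ < π / 2 :=
    (continuous_const_mul γ).continuousAt.eventually_lt continuousAt_const (by simp [pi_pos])
  obtain ⟨ρ, ⟨⟨hcosρ, hρ⟩, hγρ⟩, hρ0 : 0 < ρ⟩ :=
    (((hcos.and hρ).and hγρ).filter_mono nhdsWithin_le_nhds |>.and
      (self_mem_nhdsWithin (s := Ioi 0))).exists
  have hγρ0 : 0 < γ * ρ := mul_pos hγ hρ0
  refine ⟨ρ, ⟨hρ0, hρ⟩, ⟨hγρ0, hγρ⟩, ?_⟩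
  calc γ' * tan ρ ≤ γ * cos ρ * tan ρ := by
        gcongr
        · exact (tan_pos_of_pos_of_lt_pi_div_two hρ0 hρ).le
        · rw [div_lt_iff₀ hγ] at hcosρ; linarith
    _ = γ * sin ρ := by
        have hcos : cos ρ ≠ 0 := (cos_pos_of_mem_Ioo ⟨by linarith, hρ⟩).ne'
        rw [tan_eq_sin_div_cos, mul_assoc, mul_div_cancel₀ _ hcos]
    _ ≤ γ * ρ := by gcongr; exact sin_le hρ0.le
    _ ≤ tan (γ * ρ) := (lt_tan hγρ0 hγρ).le

open Function Gnomonic in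
/-- The spherical QST constant is at most the Euclidean one: a spherical QST with constant
`γ` yields the Euclidean QST with any constant `γ' < γ`. -/
theorem euclideanQST_from_sphericalQST (γ : ℝ) (hγ : γ ∈ Set.Ioc (0 : ℝ) 1)
    (sQST : ∀ d : ℕ, 2 ≤ d → ∀ C : Set (E (d + 1)), C ⊆ unitSphere (d + 1) →
      ∀ ρ ∈ Set.Ioo 0 (Real.pi / 2), cap (eLast d) ρ ⊆ sconv C →
        ∃ C' : Finset (E (d + 1)), ↑C' ⊆ C ∧ C'.card ≤ 2 * d ∧
          cap (eLast d) (γ * ρ) ⊆ sconv (C' : Set (E (d + 1)))) :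
    ∀ d : ℕ, 2 ≤ d → ∀ Q : Set (E d), Metric.closedBall 0 1 ⊆ convexHull ℝ Q →
      ∀ γ' : ℝ, γ' < γ →
        ∃ Q' : Finset (E d), ↑Q' ⊆ Q ∧ Q'.card ≤ 2 * d ∧
          Metric.closedBall 0 γ' ⊆ convexHull ℝ (Q' : Set (E d)) := by
  intro d hd Q hQ γ' hγ'
  obtain ⟨ρ, hρ, hγρ, htan⟩ := exists_mul_tan_le_tan_mul hγ.1 hγ'
  have hr : 0 < tan ρ := tan_pos_of_pos_of_lt_pi_div_two hρ.1 hρ.2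
  set f : E d → E (d + 1) := fun q => sphereLift (tan ρ • q)
  have hf_image : ∀ S, f '' S = sphereLift '' (tan ρ • S) := fun S => by
    rw [← image_smul, image_image]
  have hcap : cap (eLast d) ρ ⊆ sconv (f '' Q) := by
    rw [hf_image, sconv_image_sphereLift, cap_eq_image_sphereLift hρ, convexHull_smul,
      ← smul_unitClosedBall_of_nonneg hr.le]
    exact image_mono (smul_set_mono hQ)
  obtain ⟨C', hC'Q, hcard, hC'cap⟩ := sQST d hd _
    (by rintro _ ⟨q, -, rfl⟩; exact sphereLift_mem_unitSphere _) ρ hρ hcap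
  obtain ⟨Q', hQ'Q, rfl⟩ := Finset.subset_set_image_iff.1 hC'Q
  have hf_inj : Injective f := sphereLift_injective.comp (smul_right_injective _ hr.ne')
  refine ⟨Q', hQ'Q, Finset.card_image_of_injective Q' hf_inj ▸ hcard, fun y hy => ?_⟩
  have hy_cap : f y ∈ cap (eLast d) (γ * ρ) := by
    refine (sphereLift_mem_cap_iff hγρ _).2 ?_
    rw [norm_smul, norm_of_nonneg hr.le, mul_comm]
    exact (mul_le_mul_of_nonneg_right (mem_closedBall_zero_iff.1 hy) hr.le).trans htan
  have := hC'cap hy_cap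
  rwa [Finset.coe_image, hf_image, sconv_image_sphereLift, sphereLift_injective.mem_set_image,
    convexHull_smul, smul_mem_smul_set_iff₀ hr.ne'] at this
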